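/- For the instanton bundle O(S^4_θ) ⊂ O(S^7_θ), the right O(S^4_θ)-module map ρ defined on the generators T_ν of the braided derivations of O(S^4_θ) by ρ(T_ν) := Σ_μ b_μ* L_{μ,ν} is a right splitting of the Atiyah sequence 0 → aut(O(S^7_θ)) → Der_{M^H}(O(S^7_θ)) →^π Der(O(S^4_θ)) → 0, i.e. π∘ρ = id. -/
import Mathlib


/-!
STATEMENT 7: for the instanton bundle `O(S^4_θ) ⊂ O(S^7_θ)`, the right
`O(S^4_θ)`-module map `ρ` defined on the generators `T_ν` of the braided
derivations of `O(S^4_θ)` by `ρ(T_ν) := Σ_μ b_μ* L_{μ,ν}` is a right splitting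
of the Atiyah sequence
`0 → aut(O(S^7_θ)) → Der_{M^H}(O(S^7_θ)) →^π Der(O(S^4_θ)) → 0`,
i.e. `π ∘ ρ = id`.

`O(S^7_θ)` is modelled as a `ℂ`-algebra `A`, graded by the (doubled) torus
weight lattice `ℤ × ℤ`, and `O(S^4_θ)` is the coinvariant subalgebra
`B := Algebra.adjoin ℂ (b '' V)`, generated by the `b_μ`,
`μ ∈ V = {(0,0),(±1,0),(0,±1)}`, with `b_μ ∙ b_ν = λ^{2μ∧ν} b_ν ∙ b_μ` and
`Σ_μ b_μ* ∙ b_μ = 1` (`b_μ* = b_{−μ}`).  The `O(SU(2))`-equivariant braided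
derivations `L_{μ,ν}` of `O(S^7_θ)` preserve the subalgebra `B` and restrict
to `L^π_{μ,ν}(b_σ) = b_μ δ_{ν*σ} − λ^{2μ∧ν} b_ν δ_{μ*σ}`; the generators of
`Der(O(S^4_θ))` are the braided derivations `T_ν` of `B` with
`T_ν(b_σ) = δ_{νσ*} − b_ν ∙ b_σ`.  The claim `π ∘ ρ = id` says: for every
generator `T_ν`, the restriction of `ρ(T_ν) = Σ_μ b_μ* L_{μ,ν}` to the
coinvariant subalgebra `B` is exactly `T_ν`.
-/

noncomputable section

open scoped BigOperators

namespace Statement7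

/-- the five weights `{(0,0),(±1,0),(0,±1)}` -/
def V : Finset (ℤ × ℤ) := {(0,0), (1,0), (-1,0), (0,1), (0,-1)}

/-- `μ∧ν := μ₁ν₂ − μ₂ν₁` -/
def wedge (p r : ℤ × ℤ) : ℤ := p.1 * r.2 - p.2 * r.1

/-- `λ^{2 μ∧ν}` with `λ = e^{−πiθ}` -/
def q (θ : ℝ) (p r : ℤ × ℤ) : ℂ :=
  Complex.exp (-((Real.pi : ℂ) * Complex.I) * (θ : ℂ) * ((2 * wedge p r : ℤ) : ℂ))

/-- the doubled weight `2μ` (the generators `z_r` of `O(S^7_θ)` have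
half-integral weights, so the grading uses doubled weights) -/
def dbl (p : ℤ × ℤ) : ℤ × ℤ := (2 * p.1, 2 * p.2)

/-- the braiding factor between homogeneous elements of (doubled) weights
`m`, `m'`; on the subalgebra `O(S^4_θ)`, `Q7 θ (dbl μ) (dbl ν) = λ^{2μ∧ν}`. -/
def Q7 (θ : ℝ) (m m' : ℤ × ℤ) : ℂ :=
  Complex.exp (-((Real.pi : ℂ) * Complex.I) * (θ : ℂ) * (((wedge m m' : ℤ) : ℂ) / 2))

lemma negV : ∀ τ ∈ V, -τ ∈ V := by decide

lemma dbl_neg (μ : ℤ × ℤ) : dbl (-μ) = -dbl μ := by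
  simp [dbl, Prod.ext_iff]

lemma Q7_add_left (θ : ℝ) (a b c : ℤ × ℤ) : Q7 θ (a+b) c = Q7 θ a c * Q7 θ b c := by
  unfold Q7
  rw [← Complex.exp_add]
  congr 1
  have : wedge (a+b) c = wedge a c + wedge b c := by simp [wedge]; ring
  rw [this]; push_cast; ring

lemma Q7_add_right (θ : ℝ) (a b c : ℤ × ℤ) : Q7 θ a (b+c) = Q7 θ a b * Q7 θ a c := by
  unfold Q7
  rw [← Complex.exp_add]
  congr 1
  have : wedge a (b+c) = wedge a b + wedge a c := by simp [wedge]; ring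
  rw [this]; push_cast; ring

lemma Q7_zero_right (θ : ℝ) (a : ℤ × ℤ) : Q7 θ a 0 = 1 := by
  unfold Q7 wedge; simp

lemma Q7_dbl (θ : ℝ) (σ τ : ℤ × ℤ) : Q7 θ (dbl σ) (dbl τ) = q θ σ τ := by
  unfold Q7 q dbl wedge
  congr 1
  push_cast
  ring

lemma q_neg_mul (θ : ℝ) (τ ν : ℤ × ℤ) : q θ (-τ) ν * q θ τ ν = 1 := by
  unfold q
  rw [← Complex.exp_add]
  rw [show -((Real.pi : ℂ) * Complex.I) * (θ : ℂ) * ((2 * wedge (-τ) ν : ℤ) : ℂ)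
      + -((Real.pi : ℂ) * Complex.I) * (θ : ℂ) * ((2 * wedge τ ν : ℤ) : ℂ) = 0 from ?_,
    Complex.exp_zero]
  have : wedge (-τ) ν = -wedge τ ν := by simp [wedge]; ring
  rw [this]; push_cast; ring

theorem instanton_splitting
    (θ : ℝ)
    (A : Type*) [Ring A] [Algebra ℂ A]
    (𝒜 : ℤ × ℤ → Submodule ℂ A) [GradedAlgebra 𝒜]
    -- generators `b_μ` of the coinvariant subalgebra `O(S^4_θ)` (`b_μ* = b_{−μ}`)
    (b : ℤ × ℤ → A)
    (hb : ∀ μ ∈ V, b μ ∈ 𝒜 (dbl μ))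
    (hcomm : ∀ μ ∈ V, ∀ ν ∈ V, b μ * b ν = q θ μ ν • (b ν * b μ))
    (hsph : ∑ μ ∈ V, b (-μ) * b μ = 1)
    -- the `O(SU(2))`-equivariant braided derivations `L_{μ,ν}` of `O(S^7_θ)`
    (L : ℤ × ℤ → ℤ × ℤ → Module.End ℂ A)
    (hanti : ∀ μ ∈ V, ∀ ν ∈ V, L μ ν = -(q θ μ ν) • L ν μ)
    (hLval : ∀ μ ∈ V, ∀ ν ∈ V, ∀ σ ∈ V,
      L μ ν (b σ) = (if σ = -ν then (1:ℂ) else 0) • b μ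
        - q θ μ ν • ((if σ = -μ then (1:ℂ) else 0) • b ν))
    (hLeib : ∀ μ ∈ V, ∀ ν ∈ V, ∀ (m : ℤ × ℤ) (x y : A), x ∈ 𝒜 m →
      L μ ν (x * y) = L μ ν x * y + Q7 θ (dbl μ + dbl ν) m • (x * L μ ν y))
    -- the derivations `L_{μ,ν}` preserve the coinvariant subalgebra
    -- `B = O(S^4_θ)`
    (hLB : ∀ μ ∈ V, ∀ ν ∈ V, ∀ x ∈ Algebra.adjoin ℂ (b '' V),
      L μ ν x ∈ Algebra.adjoin ℂ (b '' V))
    -- the generators `T_ν` of the braided derivations of `O(S^4_θ)`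
    (Tsph : ℤ × ℤ → Module.End ℂ (Algebra.adjoin ℂ (b '' V)))
    (hTval : ∀ ν ∈ V, ∀ τ, ∀ hτ : τ ∈ V,
      ((Tsph ν ⟨b τ, Algebra.subset_adjoin (Set.mem_image_of_mem b hτ)⟩ :
          Algebra.adjoin ℂ (b '' V)) : A)
        = (if τ = -ν then 1 else 0) - b ν * b τ)
    (hTLeib : ∀ ν ∈ V, ∀ (m : ℤ × ℤ) (x y : Algebra.adjoin ℂ (b '' V)),
      (x : A) ∈ 𝒜 m →
      Tsph ν (x * y) = Tsph ν x * y + Q7 θ (dbl ν) m • (x * Tsph ν y)) :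
    -- `π ∘ ρ = id` : the restriction of `ρ(T_ν) = Σ_μ b_μ* L_{μ,ν}` to
    -- `O(S^4_θ)` is `T_ν`
    ∀ ν ∈ V, ∀ x : Algebra.adjoin ℂ (b '' V),
      (∑ μ ∈ V, b (-μ) * (L μ ν (x : A))) = ((Tsph ν x : Algebra.adjoin ℂ (b '' V)) : A) := by
  intro ν hν
  -- L μ ν kills 1
  have hL1 : ∀ μ ∈ V, L μ ν (1:A) = 0 := by
    intro μ hμ
    have h := hLeib μ hμ ν hν 0 1 1 SetLike.GradedOne.one_mem
    rw [Q7_zero_right, one_smul, mul_one, mul_one, one_mul] at h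
    exact (add_eq_right.mp h.symm)
  -- Tsph ν kills 1
  have hT1 : Tsph ν (1 : Algebra.adjoin ℂ (b '' V)) = 0 := by
    have h1 : ((1 : Algebra.adjoin ℂ (b '' V)) : A) ∈ 𝒜 0 := by
      rw [OneMemClass.coe_one]; exact SetLike.GradedOne.one_mem
    have h := hTLeib ν hν 0 1 1 h1
    rw [Q7_zero_right, one_smul, mul_one, mul_one, one_mul] at h
    exact (add_eq_right.mp h.symm)
  -- value on generators
  have hgen : ∀ τ (hτ : τ ∈ V),
      (∑ μ ∈ V, b (-μ) * L μ ν (b τ)) = (if τ = -ν then (1:A) else 0) - b ν * b τ := by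
    intro τ hτ
    have step : ∀ μ ∈ V, b (-μ) * L μ ν (b τ)
        = (if τ = -ν then (1:ℂ) else 0) • (b (-μ) * b μ)
          - (if μ = -τ then q θ μ ν • (b (-μ) * b ν) else 0) := by
      intro μ hμ
      rw [hLval μ hμ ν hν τ hτ, mul_sub, mul_smul_comm, mul_smul_comm, mul_smul_comm]
      congr 1
      by_cases h : τ = -μ
      · have h' : μ = -τ := by rw [h, neg_neg]
        rw [if_pos h, one_smul, if_pos h']
      · have h' : μ ≠ -τ := fun hh => h (by rw [hh, neg_neg])
        rw [if_neg h, if_neg h', zero_smul, smul_zero]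
    rw [Finset.sum_congr rfl step, Finset.sum_sub_distrib, ← Finset.smul_sum, hsph,
      Finset.sum_ite_eq' V (-τ) (fun μ => q θ μ ν • (b (-μ) * b ν)),
      if_pos (negV τ hτ), neg_neg, hcomm τ hτ ν hν, smul_smul, q_neg_mul, one_smul]
    split_ifs <;> simp only [one_smul, zero_smul]
  -- the key induction over the monoid closure
  have key : ∀ x ∈ Submonoid.closure (b '' V), ∃ m, x ∈ 𝒜 m ∧
      (∀ τ ∈ V, b τ * x = Q7 θ (dbl τ) m • (x * b τ)) ∧
      ∃ hxB : x ∈ Algebra.adjoin ℂ (b '' V),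
        (∑ μ ∈ V, b (-μ) * L μ ν x) = ((Tsph ν ⟨x, hxB⟩ : Algebra.adjoin ℂ (b '' V)) : A) := by
    intro x hx
    induction hx using Submonoid.closure_induction with
    | mem x hxs =>
      obtain ⟨τ, hτ', rfl⟩ := hxs
      have hτ : τ ∈ V := hτ'
      refine ⟨dbl τ, hb τ hτ, fun σ hσ => by rw [hcomm σ hσ τ hτ, Q7_dbl], ?_, ?_⟩
      · exact Algebra.subset_adjoin (Set.mem_image_of_mem b hτ)
      · rw [hgen τ hτ]
        exact (hTval ν hν τ hτ).symm
    | one =>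
      refine ⟨0, SetLike.GradedOne.one_mem,
        fun τ hτ => by rw [Q7_zero_right, one_smul, mul_one, one_mul],
        one_mem _, ?_⟩
      have h1 : (⟨(1:A), one_mem _⟩ : Algebra.adjoin ℂ (b '' V)) = 1 := rfl
      rw [h1, hT1]
      simp only [ZeroMemClass.coe_zero]
      exact Finset.sum_eq_zero fun μ hμ => by rw [hL1 μ hμ, mul_zero]
    | mul x y hxS hyS ihx ihy =>
      obtain ⟨m, hxm, hxc, hxB, hxe⟩ := ihx
      obtain ⟨m', hym, hyc, hyB, hye⟩ := ihy
      refine ⟨m + m', SetLike.mul_mem_graded hxm hym, ?_, mul_mem hxB hyB, ?_⟩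
      · intro τ hτ
        calc b τ * (x * y) = (b τ * x) * y := by rw [mul_assoc]
          _ = Q7 θ (dbl τ) m • (x * b τ * y) := by rw [hxc τ hτ, smul_mul_assoc]
          _ = Q7 θ (dbl τ) m • (x * (b τ * y)) := by rw [mul_assoc]
          _ = Q7 θ (dbl τ) m • (x * (Q7 θ (dbl τ) m' • (y * b τ))) := by rw [hyc τ hτ]
          _ = Q7 θ (dbl τ) (m + m') • (x * y * b τ) := by
              rw [mul_smul_comm, smul_smul, Q7_add_right, mul_assoc]
      · -- the Leibniz computation
        have step : ∀ μ ∈ V, b (-μ) * L μ ν (x * y)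
            = (b (-μ) * L μ ν x) * y
              + Q7 θ (dbl ν) m • (x * (b (-μ) * L μ ν y)) := by
          intro μ hμ
          rw [hLeib μ hμ ν hν m x y hxm, mul_add, ← mul_assoc]
          congr 1
          rw [mul_smul_comm, ← mul_assoc, hxc (-μ) (negV μ hμ), smul_mul_assoc,
            smul_smul, mul_assoc]
          congr 1
          rw [← Q7_add_left, dbl_neg]
          congr 1
          abel
        rw [Finset.sum_congr rfl step, Finset.sum_add_distrib, ← Finset.sum_mul,
          ← Finset.smul_sum, ← Finset.mul_sum, hxe, hye]
        have hxy : (⟨x * y, mul_mem hxB hyB⟩ : Algebra.adjoin ℂ (b '' V))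
            = ⟨x, hxB⟩ * ⟨y, hyB⟩ := rfl
        rw [hxy, hTLeib ν hν m ⟨x, hxB⟩ ⟨y, hyB⟩ hxm]
        push_cast
        rfl
  -- span induction
  rintro ⟨x, hx⟩
  have hx' : x ∈ Submodule.span ℂ ((Submonoid.closure (b '' V) : Submonoid A) : Set A) := by
    rw [← Algebra.adjoin_eq_span]; exact hx
  have main : ∀ x (_ : x ∈ Submodule.span ℂ ((Submonoid.closure (b '' V) : Submonoid A) : Set A)),
      ∃ hxB : x ∈ Algebra.adjoin ℂ (b '' V),
        (∑ μ ∈ V, b (-μ) * L μ ν x) = ((Tsph ν ⟨x, hxB⟩ : Algebra.adjoin ℂ (b '' V)) : A) := by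
    intro x hx
    induction hx using Submodule.span_induction with
    | mem x hxs =>
      obtain ⟨_, _, _, h⟩ := key x hxs
      exact h
    | zero =>
      refine ⟨zero_mem _, ?_⟩
      have h0 : (⟨(0:A), zero_mem _⟩ : Algebra.adjoin ℂ (b '' V)) = 0 := rfl
      rw [h0, map_zero]
      simp
    | add x y hxs hys ihx ihy =>
      obtain ⟨hxB, hxe⟩ := ihx
      obtain ⟨hyB, hye⟩ := ihy
      refine ⟨add_mem hxB hyB, ?_⟩
      have hxy : (⟨x + y, add_mem hxB hyB⟩ : Algebra.adjoin ℂ (b '' V))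
          = ⟨x, hxB⟩ + ⟨y, hyB⟩ := rfl
      rw [hxy, map_add]
      push_cast
      rw [← hxe, ← hye, ← Finset.sum_add_distrib]
      exact Finset.sum_congr rfl fun μ _ => by rw [map_add, mul_add]
    | smul a x hxs ihx =>
      obtain ⟨hxB, hxe⟩ := ihx
      have haxB : a • x ∈ Algebra.adjoin ℂ (b '' V) :=
        (Algebra.adjoin ℂ (b '' V)).smul_mem hxB a
      refine ⟨haxB, ?_⟩
      have hax : (⟨a • x, haxB⟩ : Algebra.adjoin ℂ (b '' V)) = a • ⟨x, hxB⟩ := rfl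
      rw [hax, map_smul]
      push_cast
      rw [← hxe, Finset.smul_sum]
      exact Finset.sum_congr rfl fun μ _ => by rw [map_smul, mul_smul_comm]
  obtain ⟨hxB, he⟩ := main x hx'
  exact he


end Statement7
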